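/- arXiv:2410.04502 — 4 statements merged into one kernel-verified Lean document; each statement's English description precedes it below -/
import Mathlib

section
/- In U = U_q(A(0,2)^{(4)})^+, for every n ≥ 1 one has the plain-commutator identities X_n·L₁² − L₁²·X_n = X_{n+2} and L₁²·Y_n − Y_n·L₁² = Y_{n+2} (these are the braided brackets [X_n, L₁²] and [L₁², Y_n], whose braiding scalars equal 1). -/
noncomputable section

namespace QAff

abbrev F : Type := FreeAlgebra ℂ (Fin 2)

def x1 : F := FreeAlgebra.ι ℂ 0
def x2 : F := FreeAlgebra.ι ℂ 1

def θ (q : ℂ) : ℂ := q - q⁻¹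

def L1F (q : ℂ) : F := x1 * x2 - q⁻¹ • (x2 * x1)

def X2F (q : ℂ) : F := x1 * L1F q - L1F q * x1

def Y2F (q : ℂ) : F := L1F q * x2 + x2 * L1F q

/-- the quantum Serre relator `[x₁,[x₁,[x₁,x₂]]]` (braided brackets w.r.t. the bicharacter
`χ((a,b),(c,d)) = (-1)^(bd) q^(ac-ad-bc+bd)`). -/
def serre1 (q : ℂ) : F := x1 * X2F q - q • (X2F q * x1)

/-- the quantum Serre relator `[[[x₁,x₂],x₂],x₂]` (braided brackets). -/
def serre2 (q : ℂ) : F := Y2F q * x2 - q • (x2 * Y2F q)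

inductive Rel (q : ℂ) : F → F → Prop
  | one : Rel q (serre1 q) 0
  | two : Rel q (serre2 q) 0

/-- `U = U_q(A(0,2)^{(4)})^+`, the free algebra on `x₁, x₂` modulo the two-sided ideal
generated by the quantum Serre relators. -/
abbrev U (q : ℂ) : Type := RingQuot (Rel q)

def π (q : ℂ) : F →ₐ[ℂ] U q := RingQuot.mkAlgHom ℂ (Rel q)

/-- `L₁ = [X₁,Y₁] = x₁x₂ - q⁻¹ x₂x₁` in `U`. -/
def L1U (q : ℂ) : U q := π q x1 * π q x2 - q⁻¹ • (π q x2 * π q x1)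

/-- real root vectors `X_n`, `n ≥ 1` (`X 0 := 0` is junk):
`X₁ = x₁`, `X_{n+1} = [X_n, L₁] = X_n L₁ - (-1)^(n-1) L₁ X_n`
(the braiding scalar is `χ((n,n-1),(1,1)) = (-1)^(n-1)`). -/
def X (q : ℂ) : ℕ → U q
  | 0 => 0
  | 1 => π q x1
  | (n+2) => X q (n+1) * L1U q - ((-1 : ℂ)^n) • (L1U q * X q (n+1))

/-- real root vectors `Y_n`, `n ≥ 1` (`Y 0 := 0` is junk):
`Y₁ = x₂`, `Y_{n+1} = [L₁, Y_n] = L₁ Y_n - (-1)^n Y_n L₁`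
(the braiding scalar is `χ((1,1),(n-1,n)) = (-1)^n`). -/
def Y (q : ℂ) : ℕ → U q
  | 0 => 0
  | 1 => π q x2
  | (n+2) => L1U q * Y q (n+1) - ((-1 : ℂ)^(n+1)) • (Y q (n+1) * L1U q)

/-- `L₀ = θ⁻¹·1`, and `L_n = [X₁, Y_n] = X₁Y_n - q⁻¹ Y_n X₁` for `n ≥ 1`
(the braiding scalar is `χ((1,0),(n-1,n)) = q⁻¹`). -/
def L (q : ℂ) : ℕ → U q
  | 0 => (θ q)⁻¹ • 1
  | (n+1) => X q 1 * Y q (n+1) - q⁻¹ • (Y q (n+1) * X q 1)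

/-- `L₀′ = θ⁻¹·1`, `L₁′ = L₁`, and
`L_n′ = [X₂, Y_{n-1}] = X₂Y_{n-1} - (-1)^(n-1) q⁻¹ Y_{n-1}X₂` for `n ≥ 2`
(the braiding scalar is `χ((2,1),(n-2,n-1)) = (-1)^(n-1) q⁻¹`). -/
def L' (q : ℂ) : ℕ → U q
  | 0 => (θ q)⁻¹ • 1
  | 1 => L q 1
  | (n+2) => X q 2 * Y q (n+1) - ((-1 : ℂ)^(n+1) * q⁻¹) • (Y q (n+1) * X q 2)

/-- `M q n` is the element `M_{2n+1}`:  `M₁ = L₁`, `M_{2n+1} = [L₂, M_{2n-1}]`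
(a plain commutator, the braiding scalar being `1`). -/
def M (q : ℂ) : ℕ → U q
  | 0 => L q 1
  | (n+1) => L q 2 * M q n - M q n * L q 2

/-- `L̃_n = (L_n + L_n′)/2`, with the convention `L̃_n = 0` for `n < 0`
(note `L̃₀ = θ⁻¹·1`). -/
def Lt (q : ℂ) (n : ℤ) : U q :=
  if 0 ≤ n then ((2 : ℂ)⁻¹) • (L q n.toNat + L' q n.toNat) else 0

/-- `L̂_{n+1} = [L_n, L₁] = L_n L₁ - (-1)^n L₁ L_n`
(the braiding scalar is `χ((n,n),(1,1)) = (-1)^n`); in particular `L̂₁ = 0`. -/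
def Lhat (q : ℂ) : ℕ → U q
  | 0 => 0
  | (n+1) => L q n * L q 1 - ((-1 : ℂ)^n) • (L q 1 * L q n)

/-- the sequence `P₀ = 1`, `P_n = q^n + q^(n-1) + (-1)^(n-1) P_(n-1)`. -/
def P (q : ℂ) : ℕ → ℂ
  | 0 => 1
  | (n+1) => q^(n+1) + q^n + (-1 : ℂ)^n * P q n

/-- the sequence `Q₀ = 1`, `Q_n = q^n - q^(n-1) + (-1)^n Q_(n-1)`. -/
def Q (q : ℂ) : ℕ → ℂ
  | 0 => 1
  | (n+1) => q^(n+1) - q^n + (-1 : ℂ)^(n+1) * Q q n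

/-- `q` is not a root of unity. -/
def NotRootOfUnity (q : ℂ) : Prop := ∀ n : ℕ, n ≠ 0 → q ^ n ≠ 1

end QAff

open QAff

section
variable {S R : Type*} [CommRing S] [Ring R] [Algebra S R]

lemma braided_bracket_twice_right_eq_commutator_sq (A B : R) {c : S} (hc : c * c = 1) :
    (A * B - c • (B * A)) * B - (-c) • (B * (A * B - c • (B * A))) = A * B ^ 2 - B ^ 2 * A := by
  rw [neg_smul, sub_neg_eq_add]
  simp only [mul_sub, sub_mul, smul_sub, mul_smul_comm, smul_mul_assoc, smul_smul, hc, pow_two,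
    one_smul, mul_assoc]
  abel

lemma braided_bracket_twice_left_eq_commutator_sq (A B : R) {c : S} (hc : c * c = 1) :
    B * (B * A - c • (A * B)) - (-c) • ((B * A - c • (A * B)) * B) = B ^ 2 * A - A * B ^ 2 := by
  rw [neg_smul, sub_neg_eq_add]
  simp only [mul_sub, sub_mul, smul_sub, mul_smul_comm, smul_mul_assoc, smul_smul, hc, pow_two,
    one_smul, mul_assoc]
  abel

end

theorem stmt0_general (q : ℂ) (n : ℕ) (hn : 1 ≤ n) :
    X q n * (L q 1)^2 - (L q 1)^2 * X q n = X q (n+2) ∧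
    (L q 1)^2 * Y q n - Y q n * (L q 1)^2 = Y q (n+2) := by
  obtain ⟨m, rfl⟩ := Nat.exists_eq_add_of_le' hn
  have hL : L q 1 = L1U q := rfl
  have hsq (k : ℕ) : (-1 : ℂ) ^ k * (-1) ^ k = 1 := by rw [← mul_pow]; norm_num
  have hsign (k : ℕ) : (-1 : ℂ) ^ (k + 1) = -(-1) ^ k := by ring
  constructor
  · rw [X.eq_3, X.eq_3, hL, hsign, braided_bracket_twice_right_eq_commutator_sq _ _ (hsq m)]
  · rw [Y.eq_3, Y.eq_3, hL, hsign (m + 1),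
      braided_bracket_twice_left_eq_commutator_sq _ _ (hsq (m + 1))]

/-- In `U = U_q(A(0,2)^{(4)})^+`, for every `n ≥ 1`:
`[X_n, L₁²] = X_n L₁² - L₁² X_n = X_{n+2}` and `[L₁², Y_n] = L₁² Y_n - Y_n L₁² = Y_{n+2}`. -/
theorem stmt0 (q : ℂ) (hq0 : q ≠ 0) (hq : NotRootOfUnity q) (n : ℕ) (hn : 1 ≤ n) :
    X q n * (L q 1)^2 - (L q 1)^2 * X q n = X q (n+2) ∧
    (L q 1)^2 * Y q n - Y q n * (L q 1)^2 = Y q (n+2) :=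
  stmt0_general q n hn
end
end

section
/- In U = U_q(A(0,2)^{(4)})^+, for every n ≥ 1 one has L′_{2n+1} = L_{2n+1} + [L_{2n}, L₁] and L′_{2n+2} = L_{2n+2} − [L_{2n+1}, L₁], where [L_{2n}, L₁] = L_{2n}L₁ − L₁L_{2n} (braiding scalar 1) and [L_{2n+1}, L₁] = L_{2n+1}L₁ + L₁L_{2n+1} (braiding scalar −1). -/
noncomputable section

open QAff

/-! Both identities are instances of the braided Jacobi identity
`[[x, l]₁, y]_{st} = [x, [l, y]_s]_t - [l, [x, y]_t]_s`, applied to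
`L′_{k+2} = [[X₁, L₁], Y_{k+1}]`; the sign `s = (-1)^(k+1)` of `[L₁, Y_{k+1}]` decides whether the
correction term `[L_{k+1}, L₁]` is a commutator or an anticommutator. -/

namespace QAff

section BraidedBracket

variable {R A : Type*} [CommRing R] [Ring A] [Algebra R A]

def braidedBracket (c : R) (u v : A) : A := u * v - c • (v * u)

theorem braidedBracket_braidedBracket (s t : R) (x l y : A) :
    braidedBracket (s * t) (braidedBracket (1 : R) x l) y =
      braidedBracket t x (braidedBracket s l y) - braidedBracket s l (braidedBracket t x y) := by
  simp only [braidedBracket, one_smul, mul_sub, sub_mul, smul_sub, smul_mul_assoc, mul_smul_comm,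
    smul_smul, mul_assoc]
  module

end BraidedBracket

section RootVectors

variable (q : ℂ) (n : ℕ)

theorem L_one : L q 1 = L1U q := rfl

theorem L_succ : L q (n + 1) = braidedBracket q⁻¹ (X q 1) (Y q (n + 1)) := rfl

theorem X_two : X q 2 = braidedBracket (1 : ℂ) (X q 1) (L q 1) := by
  rw [L_one, braidedBracket, ← pow_zero (-1 : ℂ)]
  rfl

theorem Y_add_two :
    Y q (n + 2) = braidedBracket ((-1 : ℂ) ^ (n + 1)) (L q 1) (Y q (n + 1)) := rfl

theorem L'_add_two_eq_braidedBracket :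
    L' q (n + 2) = braidedBracket ((-1 : ℂ) ^ (n + 1) * q⁻¹) (X q 2) (Y q (n + 1)) := rfl

theorem L'_add_two :
    L' q (n + 2) = L q (n + 2) - braidedBracket ((-1 : ℂ) ^ (n + 1)) (L q 1) (L q (n + 1)) := by
  rw [L'_add_two_eq_braidedBracket, X_two, braidedBracket_braidedBracket, ← Y_add_two, ← L_succ,
    ← L_succ]

end RootVectors

end QAff

open QAff

theorem stmt1_general (q : ℂ) (n : ℕ) (hn : 1 ≤ n) :
    L' q (2*n+1) = L q (2*n+1) + (L q (2*n) * L q 1 - L q 1 * L q (2*n)) ∧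
    L' q (2*n+2) = L q (2*n+2) - (L q (2*n+1) * L q 1 + L q 1 * L q (2*n+1)) := by
  obtain ⟨m, rfl⟩ : ∃ m, n = m + 1 := ⟨n - 1, by omega⟩
  constructor
  · rw [show 2 * (m + 1) + 1 = 2 * m + 1 + 2 by ring, show 2 * (m + 1) = 2 * m + 1 + 1 by ring,
      L'_add_two, Even.neg_one_pow ⟨m + 1, by ring⟩, braidedBracket]
    module
  · rw [show 2 * (m + 1) + 2 = 2 * m + 2 + 2 by ring, show 2 * (m + 1) + 1 = 2 * m + 2 + 1 by ring,
      L'_add_two, Odd.neg_one_pow ⟨m + 1, by ring⟩, braidedBracket]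
    module

/-- In `U = U_q(A(0,2)^{(4)})^+`, for every `n ≥ 1`:
`L′_{2n+1} = L_{2n+1} + [L_{2n}, L₁]` and `L′_{2n+2} = L_{2n+2} - [L_{2n+1}, L₁]`,
where `[L_{2n}, L₁] = L_{2n}L₁ - L₁L_{2n}` and `[L_{2n+1}, L₁] = L_{2n+1}L₁ + L₁L_{2n+1}`. -/
theorem stmt1 (q : ℂ) (hq0 : q ≠ 0) (hq : NotRootOfUnity q) (n : ℕ) (hn : 1 ≤ n) :
    L' q (2*n+1) = L q (2*n+1) + (L q (2*n) * L q 1 - L q 1 * L q (2*n)) ∧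
    L' q (2*n+2) = L q (2*n+2) - (L q (2*n+1) * L q 1 + L q 1 * L q (2*n+1)) :=
  stmt1_general q n hn
end
end

section
/- In U = U_q(A(0,2)^{(4)})^+, for every n ≥ 1: [M_{2n+1}, M_{2n−1}] = [L₂, M_{2n−1}²], where [M_{2n+1}, M_{2n−1}] = M_{2n+1}M_{2n−1} + M_{2n−1}M_{2n+1} (braiding scalar −1) and [L₂, M_{2n−1}²] = L₂M_{2n−1}² − M_{2n−1}²L₂ (braiding scalar 1). Moreover, if [L₂, M_{2n−1}²] = 0 then [M_{2n+3}, M_{2n−1}] = M_{2n+3}M_{2n−1} + M_{2n−1}M_{2n+3} = −2·M_{2n+1}². -/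
noncomputable section

open QAff

/-!
Both identities hold in every associative ring, with `A = L₂`, `B = M_{2n-1}`,
`M_{2n+1} = ⁅A, B⁆` and `M_{2n+3} = ⁅A, ⁅A, B⁆⁆`. The first is the Leibniz rule for the
derivation `⁅A, ·⁆` applied to `B * B`. For the second, apply `⁅A, ·⁆` once more:
`0 = ⁅A, ⁅A, B * B⁆⁆ = ⁅A, ⁅A, B⁆⁆ * B + 2 * ⁅A, B⁆ ^ 2 + B * ⁅A, ⁅A, B⁆⁆`.
-/

namespace Ring

variable {R : Type*} [Ring R]

theorem lie_mul (a b c : R) : ⁅a, b * c⁆ = ⁅a, b⁆ * c + b * ⁅a, c⁆ := by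
  simp only [lie_def]
  noncomm_ring

theorem lie_lie_mul_add_mul_lie_lie {a b : R} (h : ⁅a, b * b⁆ = 0) :
    ⁅a, ⁅a, b⁆⁆ * b + b * ⁅a, ⁅a, b⁆⁆ = -2 * ⁅a, b⁆ ^ 2 := by
  have hsecond : ⁅a, ⁅a, b * b⁆⁆ = ⁅a, ⁅a, b⁆⁆ * b + b * ⁅a, ⁅a, b⁆⁆ + 2 * ⁅a, b⁆ ^ 2 := by
    rw [lie_mul]
    simp only [lie_def]
    noncomm_ring
  rw [h, lie_def, mul_zero, zero_mul, sub_zero] at hsecond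
  rw [neg_mul]
  exact eq_neg_of_add_eq_zero_left hsecond.symm

end Ring

theorem stmt3_general (q : ℂ) (n : ℕ) :
    (M q (n+1) * M q n + M q n * M q (n+1) = L q 2 * (M q n)^2 - (M q n)^2 * L q 2) ∧
    (L q 2 * (M q n)^2 - (M q n)^2 * L q 2 = 0 →
      M q (n+2) * M q n + M q n * M q (n+2) = (-2 : ℂ) • (M q (n+1))^2) := by
  have hM (k : ℕ) : M q (k + 1) = ⁅L q 2, M q k⁆ := rfl
  have hsq : L q 2 * (M q n)^2 - (M q n)^2 * L q 2 = ⁅L q 2, M q n * M q n⁆ := by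
    rw [pow_two, Ring.lie_def]
  refine ⟨?_, fun h => ?_⟩
  · rw [hsq, Ring.lie_mul, hM]
  · rw [hsq] at h
    rw [hM (n + 1), hM n, Ring.lie_lie_mul_add_mul_lie_lie h, Algebra.smul_def, map_neg,
      map_ofNat]

/-- In `U = U_q(A(0,2)^{(4)})^+`, for every `n ≥ 1` (here stated for all `n ≥ 0` after the
reindexing `n ↦ n+1`, with `M q k = M_{2k+1}`):
`[M_{2n+1}, M_{2n-1}] = M_{2n+1}M_{2n-1} + M_{2n-1}M_{2n+1} = [L₂, M_{2n-1}²]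
 = L₂M_{2n-1}² - M_{2n-1}²L₂`, and if `[L₂, M_{2n-1}²] = 0` then
`[M_{2n+3}, M_{2n-1}] = M_{2n+3}M_{2n-1} + M_{2n-1}M_{2n+3} = -2·M_{2n+1}²`. -/
theorem stmt3 (q : ℂ) (hq0 : q ≠ 0) (hq : NotRootOfUnity q) (n : ℕ) :
    (M q (n+1) * M q n + M q n * M q (n+1) = L q 2 * (M q n)^2 - (M q n)^2 * L q 2) ∧
    (L q 2 * (M q n)^2 - (M q n)^2 * L q 2 = 0 →
      M q (n+2) * M q n + M q n * M q (n+2) = (-2 : ℂ) • (M q (n+1))^2) :=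
  stmt3_general q n
end
end

section
/- In U = U_q(A(0,2)^{(4)})^+ the following identities hold (all four brackets are plain commutators, the braiding scalars being 1): [X₁, L₂] = (q+2)X₃ − θ·L₁X₂; [X₁, L₂′] = q·X₃ − θ·L₁X₂; [L₂, Y₁] = q·Y₃ + θ·Y₂L₁; [L₂′, Y₁] = (q−2)Y₃ + θ·Y₂L₁. -/
noncomputable section

/-! In degree `(3,2)` the ideal of relations is spanned by `s * x₂` and `x₂ * s`, where
`s = [X₁, X₂]_q = X₁X₂ - q X₂X₁` is the first Serre relator, and symmetrically in degree `(2,3)`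
with the second one `[Y₂, Y₁]_q`. Expanding both sides of each identity into words in `x₁, x₂`
shows that their difference is exactly `s x₂ + q⁻² x₂ s` (resp. `x₁ s' - q⁻² s' x₁`). -/

namespace QAff

variable (q : ℂ)

theorem X_one_mul_X_two : X q 1 * X q 2 = q • (X q 2 * X q 1) := by
  have h : π q (serre1 q) = 0 := (RingQuot.mkAlgHom_rel ℂ Rel.one).trans (map_zero _)
  rw [← sub_eq_zero, ← h]
  simp only [X, L1U, serre1, X2F, L1F, map_sub, map_mul, map_smul, mul_sub, sub_mul,
    smul_mul_assoc, mul_smul_comm, smul_sub, smul_smul, mul_assoc]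
  match_scalars <;> ring

theorem Y_two_mul_Y_one : Y q 2 * Y q 1 = q • (Y q 1 * Y q 2) := by
  have h : π q (serre2 q) = 0 := (RingQuot.mkAlgHom_rel ℂ Rel.two).trans (map_zero _)
  rw [← sub_eq_zero, ← h]
  simp only [Y, L1U, serre2, Y2F, L1F, map_sub, map_add, map_mul, map_smul, mul_sub, sub_mul,
    mul_add, add_mul, smul_mul_assoc, mul_smul_comm, smul_sub, smul_add, smul_smul, mul_assoc]
  match_scalars <;> ring

theorem X_one_mul_L_two_sub (hq0 : q ≠ 0) :
    X q 1 * L q 2 - L q 2 * X q 1 - ((q + 2) • X q 3 - θ q • (L q 1 * X q 2)) =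
      (X q 1 * X q 2 - q • (X q 2 * X q 1)) * Y q 1
        + (q ^ 2)⁻¹ • (Y q 1 * (X q 1 * X q 2 - q • (X q 2 * X q 1))) := by
  simp only [X, Y, L, L1U, θ, mul_sub, sub_mul, add_mul, smul_mul_assoc, mul_smul_comm,
    smul_sub, smul_smul, mul_assoc, sub_smul, add_smul]
  match_scalars <;> field_simp <;> ring

theorem X_one_mul_L'_two_sub (hq0 : q ≠ 0) :
    X q 1 * L' q 2 - L' q 2 * X q 1 - (q • X q 3 - θ q • (L q 1 * X q 2)) =
      (X q 1 * X q 2 - q • (X q 2 * X q 1)) * Y q 1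
        + (q ^ 2)⁻¹ • (Y q 1 * (X q 1 * X q 2 - q • (X q 2 * X q 1))) := by
  simp only [X, Y, L, L', L1U, θ, mul_sub, sub_mul, smul_mul_assoc, mul_smul_comm, smul_sub,
    smul_smul, mul_assoc, sub_smul]
  match_scalars <;> field_simp <;> ring

theorem L_two_mul_Y_one_sub (hq0 : q ≠ 0) :
    L q 2 * Y q 1 - Y q 1 * L q 2 - (q • Y q 3 + θ q • (Y q 2 * L q 1)) =
      X q 1 * (Y q 2 * Y q 1 - q • (Y q 1 * Y q 2))
        - (q ^ 2)⁻¹ • ((Y q 2 * Y q 1 - q • (Y q 1 * Y q 2)) * X q 1) := by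
  simp only [X, Y, L, L1U, θ, mul_sub, sub_mul, smul_mul_assoc, mul_smul_comm, smul_sub,
    smul_smul, mul_assoc, sub_smul]
  match_scalars <;> field_simp <;> ring

theorem L'_two_mul_Y_one_sub (hq0 : q ≠ 0) :
    L' q 2 * Y q 1 - Y q 1 * L' q 2 - ((q - 2) • Y q 3 + θ q • (Y q 2 * L q 1)) =
      X q 1 * (Y q 2 * Y q 1 - q • (Y q 1 * Y q 2))
        - (q ^ 2)⁻¹ • ((Y q 2 * Y q 1 - q • (Y q 1 * Y q 2)) * X q 1) := by
  simp only [X, Y, L, L', L1U, θ, mul_sub, sub_mul, smul_mul_assoc, mul_smul_comm, smul_sub,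
    smul_smul, mul_assoc, sub_smul]
  match_scalars <;> field_simp <;> ring

end QAff

open QAff

theorem stmt4_general (q : ℂ) (hq0 : q ≠ 0) :
    (X q 1 * L q 2 - L q 2 * X q 1 = (q + 2) • X q 3 - θ q • (L q 1 * X q 2)) ∧
    (X q 1 * L' q 2 - L' q 2 * X q 1 = q • X q 3 - θ q • (L q 1 * X q 2)) ∧
    (L q 2 * Y q 1 - Y q 1 * L q 2 = q • Y q 3 + θ q • (Y q 2 * L q 1)) ∧
    (L' q 2 * Y q 1 - Y q 1 * L' q 2 = (q - 2) • Y q 3 + θ q • (Y q 2 * L q 1)) := by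
  have serreX : X q 1 * X q 2 - q • (X q 2 * X q 1) = 0 := sub_eq_zero.mpr (X_one_mul_X_two q)
  have serreY : Y q 2 * Y q 1 - q • (Y q 1 * Y q 2) = 0 := sub_eq_zero.mpr (Y_two_mul_Y_one q)
  refine ⟨?_, ?_, ?_, ?_⟩ <;> rw [← sub_eq_zero]
  · simpa [serreX] using X_one_mul_L_two_sub q hq0
  · simpa [serreX] using X_one_mul_L'_two_sub q hq0
  · simpa [serreY] using L_two_mul_Y_one_sub q hq0
  · simpa [serreY] using L'_two_mul_Y_one_sub q hq0

/-- In `U = U_q(A(0,2)^{(4)})^+`: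
`[X₁, L₂] = (q+2)X₃ - θL₁X₂`, `[X₁, L₂′] = qX₃ - θL₁X₂`,
`[L₂, Y₁] = qY₃ + θY₂L₁`, `[L₂′, Y₁] = (q-2)Y₃ + θY₂L₁` (all plain commutators). -/
theorem stmt4 (q : ℂ) (hq0 : q ≠ 0) (hq : NotRootOfUnity q) :
    (X q 1 * L q 2 - L q 2 * X q 1 = (q + 2) • X q 3 - θ q • (L q 1 * X q 2)) ∧
    (X q 1 * L' q 2 - L' q 2 * X q 1 = q • X q 3 - θ q • (L q 1 * X q 2)) ∧
    (L q 2 * Y q 1 - Y q 1 * L q 2 = q • Y q 3 + θ q • (Y q 2 * L q 1)) ∧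
    (L' q 2 * Y q 1 - Y q 1 * L' q 2 = (q - 2) • Y q 3 + θ q • (Y q 2 * L q 1)) :=
  stmt4_general q hq0
end
end
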